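/- arXiv:1304.0350 — 2 statements merged into one kernel-verified Lean document; each statement's English description precedes it below -/
import Mathlib

section
/- Let a ≥ 1 be an integer and let G be the subgroup of permutations of (ℤ/aℤ)² generated by the two maps (x, y) ↦ (x + y, y) and (x, y) ↦ (x, x + y). Then two elements (x, y) and (x', y') of (ℤ/aℤ)² lie in the same G-orbit if and only if gcd(x, y, a) = gcd(x', y', a). -/
/-!
The shears preserve `gcd(x, y, a)`: reducing `x + y` modulo `a` does not change its gcd with
`gcd(y, a)`. Conversely, the Euclidean algorithm, run with powers of the shears on the
representatives, moves `(x, y)` to `(g, 0)` with `g = gcd(x, y)`. For `d = gcd(g, a)` a Bézout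
coefficient `k` with `k g ≡ d (mod a)` moves `(g, 0)` to `(g, d)`, and as `d ∣ g` we reach
`(0, d)` and then `(d, 0)`. So every orbit contains `(gcd(x, y, a), 0)`.
-/

/-- The shear (x, y) ↦ (x + y, y) as a permutation of (ℤ/aℤ)². -/
def shear1 (a : ℕ) : Equiv.Perm (ZMod a × ZMod a) where
  toFun p := (p.1 + p.2, p.2)
  invFun p := (p.1 - p.2, p.2)
  left_inv p := by simp
  right_inv p := by simp

/-- The shear (x, y) ↦ (x, x + y) as a permutation of (ℤ/aℤ)². -/
def shear2 (a : ℕ) : Equiv.Perm (ZMod a × ZMod a) where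
  toFun p := (p.1, p.1 + p.2)
  invFun p := (p.1, p.2 - p.1)
  left_inv p := by simp
  right_inv p := by simp

open Equiv MulAction

theorem Equiv.Perm.invariant_of_mem_closure {α β : Type*} {S : Set (Perm α)} {f : α → β}
    (hS : ∀ s ∈ S, ∀ x, f (s x) = f x) {g : Perm α} (hg : g ∈ Subgroup.closure S) (x : α) :
    f (g x) = f x := by
  induction hg using Subgroup.closure_induction generalizing x with
  | mem s hs => exact hS s hs x
  | one => rfl
  | mul g h _ _ ihg ihh => rw [Perm.mul_apply, ihg, ihh]
  | inv g _ ihg => simpa using (ihg (g⁻¹ x)).symm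

def shearGroup (a : ℕ) : Subgroup (Perm (ZMod a × ZMod a)) :=
  Subgroup.closure {shear1 a, shear2 a}

section Invariant

variable {a : ℕ} [NeZero a]

theorem gcd_gcd_val_add_left (u v : ZMod a) :
    Nat.gcd (Nat.gcd (u + v).val v.val) a = Nat.gcd (Nat.gcd u.val v.val) a := by
  rw [Nat.gcd_assoc, Nat.gcd_assoc]
  set m := Nat.gcd v.val a
  obtain ⟨c, hc⟩ : m ∣ v.val := Nat.gcd_dvd_left _ _
  have hmod : (u + v).val ≡ u.val + m * c [MOD m] := by
    rw [ZMod.val_add, ← hc]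
    exact (Nat.mod_modEq _ _).of_dvd (Nat.gcd_dvd_right _ _)
  rw [hmod.gcd_eq, Nat.gcd_add_mul_left_left]

def content (v : ZMod a × ZMod a) : ℕ :=
  Nat.gcd (Nat.gcd v.1.val v.2.val) a

theorem content_shear1 (v : ZMod a × ZMod a) : content (shear1 a v) = content v :=
  gcd_gcd_val_add_left v.1 v.2

theorem content_shear2 (v : ZMod a × ZMod a) : content (shear2 a v) = content v := by
  change Nat.gcd (Nat.gcd v.1.val (v.1 + v.2).val) a = Nat.gcd (Nat.gcd v.1.val v.2.val) a
  rw [Nat.gcd_comm v.1.val, add_comm, gcd_gcd_val_add_left, Nat.gcd_comm v.2.val]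

theorem content_apply_of_mem_shearGroup {g : Perm (ZMod a × ZMod a)} (hg : g ∈ shearGroup a)
    (v : ZMod a × ZMod a) : content (g v) = content v := by
  refine Perm.invariant_of_mem_closure ?_ hg v
  rintro s (rfl | rfl)
  exacts [content_shear1, content_shear2]

end Invariant

section Orbit

variable {a : ℕ}

@[simp] theorem shear1_apply (v : ZMod a × ZMod a) : shear1 a v = (v.1 + v.2, v.2) := rfl

@[simp] theorem shear1_inv_apply (v : ZMod a × ZMod a) : (shear1 a)⁻¹ v = (v.1 - v.2, v.2) := rfl

@[simp] theorem shear2_apply (v : ZMod a × ZMod a) : shear2 a v = (v.1, v.1 + v.2) := rfl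

@[simp] theorem shear2_inv_apply (v : ZMod a × ZMod a) : (shear2 a)⁻¹ v = (v.1, v.2 - v.1) := rfl

theorem shear1_zpow_apply (k : ℤ) (v : ZMod a × ZMod a) :
    (shear1 a ^ k) v = (v.1 + k * v.2, v.2) := by
  induction k using Int.induction_on generalizing v with
  | zero => simp
  | succ k ih => simp only [zpow_add_one, Perm.mul_apply, ih, shear1_apply]; push_cast; ring_nf
  | pred k ih => simp only [zpow_sub_one, Perm.mul_apply, ih, shear1_inv_apply]; push_cast; ring_nf

theorem shear2_zpow_apply (k : ℤ) (v : ZMod a × ZMod a) :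
    (shear2 a ^ k) v = (v.1, v.2 + k * v.1) := by
  induction k using Int.induction_on generalizing v with
  | zero => simp
  | succ k ih => simp only [zpow_add_one, Perm.mul_apply, ih, shear2_apply]; push_cast; ring_nf
  | pred k ih => simp only [zpow_sub_one, Perm.mul_apply, ih, shear2_inv_apply]; push_cast; ring_nf

theorem orbit_fst_add_mul (k : ℤ) (x y : ZMod a) :
    orbit (shearGroup a) (x + k * y, y) = orbit (shearGroup a) (x, y) :=
  orbit_eq_iff.mpr
    ⟨⟨shear1 a ^ k, zpow_mem (Subgroup.subset_closure (by simp)) k⟩, shear1_zpow_apply k (x, y)⟩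

theorem orbit_snd_add_mul (k : ℤ) (x y : ZMod a) :
    orbit (shearGroup a) (x, y + k * x) = orbit (shearGroup a) (x, y) :=
  orbit_eq_iff.mpr
    ⟨⟨shear2 a ^ k, zpow_mem (Subgroup.subset_closure (by simp)) k⟩, shear2_zpow_apply k (x, y)⟩

theorem orbit_zero_left (t : ZMod a) :
    orbit (shearGroup a) (0, t) = orbit (shearGroup a) (t, 0) := by
  have h1 := orbit_fst_add_mul 1 0 t
  have h2 := orbit_snd_add_mul 1 t 0
  simp only [Int.cast_one, one_mul, zero_add] at h1 h2
  rw [← h1, h2]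

theorem orbit_natCast_eq_gcd (m n : ℕ) :
    orbit (shearGroup a) ((m : ZMod a), (n : ZMod a)) =
      orbit (shearGroup a) ((Nat.gcd m n : ZMod a), 0) := by
  -- A Euclid step exchanges the roles of the coordinates, so both orders go through the induction.
  suffices orbit (shearGroup a) ((m : ZMod a), (n : ZMod a)) =
        orbit (shearGroup a) ((Nat.gcd m n : ZMod a), 0) ∧
      orbit (shearGroup a) ((n : ZMod a), (m : ZMod a)) =
        orbit (shearGroup a) ((Nat.gcd m n : ZMod a), 0) from this.1
  induction m, n using Nat.gcd.induction with
  | H0 n => simpa using orbit_zero_left (n : ZMod a)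
  | H1 m n _ ih =>
    have hn : (n : ZMod a) = (n % m : ℕ) + ((n / m : ℕ) : ℤ) * (m : ZMod a) := by
      rw [Int.cast_natCast, ← Nat.cast_mul, ← Nat.cast_add, Nat.mod_add_div']
    rw [Nat.gcd_rec, hn, orbit_snd_add_mul, orbit_fst_add_mul]
    exact ih.symm

end Orbit

theorem orbit_eq_orbit_content {a : ℕ} [NeZero a] (v : ZMod a × ZMod a) :
    orbit (shearGroup a) v = orbit (shearGroup a) ((content v : ZMod a), 0) := by
  obtain ⟨x, y⟩ := v
  set g := Nat.gcd x.val y.val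
  set d := content (x, y)
  have hbezout : (d : ZMod a) = (Nat.gcdA g a : ZMod a) * g := by
    have h := congrArg (Int.cast : ℤ → ZMod a) (Nat.gcd_eq_gcd_ab g a)
    push_cast [ZMod.natCast_self, zero_mul, add_zero] at h
    rw [mul_comm]
    exact h
  obtain ⟨c, hc⟩ : d ∣ g := Nat.gcd_dvd_left g a
  calc orbit (shearGroup a) (x, y)
      = orbit (shearGroup a) ((x.val : ZMod a), (y.val : ZMod a)) := by
        simp only [ZMod.natCast_zmod_val]
    _ = orbit (shearGroup a) ((g : ZMod a), 0) := orbit_natCast_eq_gcd _ _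
    _ = orbit (shearGroup a) ((g : ZMod a), (d : ZMod a)) := by
        rw [← orbit_snd_add_mul (Nat.gcdA g a) _ 0, zero_add, ← hbezout]
    _ = orbit (shearGroup a) (0, (d : ZMod a)) := by
        rw [← orbit_fst_add_mul c 0, zero_add, hc, Nat.cast_mul, Int.cast_natCast, mul_comm]
    _ = orbit (shearGroup a) ((d : ZMod a), 0) := orbit_zero_left _

/-- Two elements of (ℤ/aℤ)² lie in the same orbit of the group generated by the
two shears iff gcd(x, y, a) = gcd(x', y', a). -/
theorem orbit_iff_gcd_eq (a : ℕ) (ha : 1 ≤ a) (v w : ZMod a × ZMod a) :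
    (∃ g ∈ Subgroup.closure {shear1 a, shear2 a}, g v = w) ↔
      Nat.gcd (Nat.gcd v.1.val v.2.val) a = Nat.gcd (Nat.gcd w.1.val w.2.val) a := by
  have : NeZero a := ⟨by omega⟩
  change _ ↔ content v = content w
  constructor
  · rintro ⟨g, hg, rfl⟩
    exact (content_apply_of_mem_shearGroup hg v).symm
  · intro h
    have horbit : orbit (shearGroup a) w = orbit (shearGroup a) v := by
      rw [orbit_eq_orbit_content v, orbit_eq_orbit_content w, h]
    obtain ⟨⟨g, hg⟩, hgv⟩ := orbit_eq_iff.mp horbit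
    exact ⟨g, hg, hgv⟩
end

section
/- Let a₁, a₂, a₃ be integers, not all zero, with a₁ + a₂ + a₃ = 0 and gcd(a₁, a₂, a₃) = 1. Then by repeatedly applying the moves (a₁, a₂, a₃) ↦ (a₁ − a₃, a₂ + a₃, a₃) and permutations of the three entries, one can transform (a₁, a₂, a₃) into (1, 1, −2). That is, (1,1,−2) lies in the orbit of (a₁,a₂,a₃) under the group generated by these operations on ℤ³. -/
/-- One step of the reduction: either the shear move
(a₁,a₂,a₃) ↦ (a₁−a₃, a₂+a₃, a₃) or a transposition of entries (the two
transpositions below generate all permutations of the three entries). -/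
inductive SigMove : ℤ × ℤ × ℤ → ℤ × ℤ × ℤ → Prop
  | shear (a₁ a₂ a₃ : ℤ) : SigMove (a₁, a₂, a₃) (a₁ - a₃, a₂ + a₃, a₃)
  | swap12 (a₁ a₂ a₃ : ℤ) : SigMove (a₁, a₂, a₃) (a₂, a₁, a₃)
  | swap23 (a₁ a₂ a₃ : ℤ) : SigMove (a₁, a₂, a₃) (a₁, a₃, a₂)

/-!
Along a zero-sum triple `(a, b, -(a + b))` the moves run the Euclidean algorithm on `(a, b)`:
conjugating the shear by transpositions moves a multiple of the second entry from the first
entry to the third, and a transposition then swaps the first two entries. Since the gcd of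
`a` and `b` is `1`, the algorithm ends at `(±1, 0, ∓1)`, and from there `(1, 1, -2)` is a few
moves away.
-/

open Relation

namespace SigMove

theorem reflTransGen_sub (a b c : ℤ) : ReflTransGen SigMove (a, b, c) (a - b, b, c + b) :=
  .head (swap23 a b c) <| .head (shear a c b) <| .single (swap23 _ _ _)

theorem reflTransGen_add (a b c : ℤ) : ReflTransGen SigMove (a, b, c) (a + b, b, c - b) :=
  .head (swap23 a b c) <| .head (swap12 a c b) <| .head (shear c a b) <|
    .head (swap12 _ _ _) <| .single (swap23 _ _ _)

theorem reflTransGen_sub_mul (a b c k : ℤ) :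
    ReflTransGen SigMove (a, b, c) (a - k * b, b, c + k * b) := by
  induction k using Int.induction_on with
  | zero => simpa using ReflTransGen.refl
  | succ n ih =>
    have := ih.trans (reflTransGen_sub (a - n * b) b (c + n * b))
    rwa [sub_sub, add_assoc, ← add_one_mul] at this
  | pred n ih =>
    have := ih.trans (reflTransGen_add (a - -n * b) b (c + -n * b))
    rwa [sub_add, add_sub_assoc, ← sub_one_mul] at this

theorem reflTransGen_neg_one_zero_one : ReflTransGen SigMove (-1, 0, 1) (1, 1, -2) :=
  .head (by simpa using shear (-1) 0 1) <| .head (swap12 (-2) 1 1) <| .single (swap23 1 (-2) 1)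

theorem reflTransGen_one_zero_neg_one : ReflTransGen SigMove (1, 0, -1) (1, 1, -2) :=
  .head (swap12 1 0 (-1)) <| .head (swap23 0 1 (-1)) <|
    .head (by simpa using shear 0 (-1) 1) reflTransGen_neg_one_zero_one

theorem reflTransGen_euclid_step (a b : ℤ) :
    ReflTransGen SigMove (a, b, -(a + b)) (b, a % b, -(b + a % b)) := by
  refine (reflTransGen_sub_mul a b (-(a + b)) (a / b)).tail ?_
  convert swap12 (a - a / b * b) b (-(a + b) + a / b * b) using 3 <;>
    rw [Int.emod_def] <;> ring

theorem reflTransGen_of_gcd_eq_one (a b : ℤ) (h : Int.gcd a b = 1) :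
    ReflTransGen SigMove (a, b, -(a + b)) (1, 1, -2) := by
  induction hn : b.natAbs using Nat.strong_induction_on generalizing a b with
  | _ n ih =>
    rcases eq_or_ne b 0 with rfl | hb
    · obtain rfl | rfl : a = 1 ∨ a = -1 := Int.natAbs_eq_natAbs_iff.mp (by simpa using h)
      · exact reflTransGen_one_zero_neg_one
      · exact reflTransGen_neg_one_zero_one
    · have hlt : (a % b).natAbs < n := by
        have := Int.emod_nonneg a hb
        have := Int.emod_lt a hb
        omega
      refine (reflTransGen_euclid_step a b).trans (ih _ hlt b (a % b) ?_ rfl)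
      rw [Int.gcd_comm, Int.gcd_emod, h]

end SigMove

theorem reduce_to_one_one_negtwo_general (a₁ a₂ a₃ : ℤ)
    (hsum : a₁ + a₂ + a₃ = 0)
    (hgcd : Int.gcd (Int.gcd a₁ a₂) a₃ = 1) :
    Relation.ReflTransGen SigMove (a₁, a₂, a₃) (1, 1, -2) := by
  obtain rfl : a₃ = -(a₁ + a₂) := by linarith
  have hdvd : (Int.gcd a₁ a₂ : ℤ) ∣ -(a₁ + a₂) :=
    (dvd_add (Int.gcd_dvd_left _ _) (Int.gcd_dvd_right _ _)).neg_right
  have hcop : Int.gcd a₁ a₂ = 1 := by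
    rw [← hgcd]
    exact_mod_cast (Int.gcd_eq_left (Int.natCast_nonneg _) hdvd).symm
  exact SigMove.reflTransGen_of_gcd_eq_one a₁ a₂ hcop

/-- Every primitive nonzero zero-sum triple can be transformed into (1,1,−2)
by the shear move and permutations of the entries. -/
theorem reduce_to_one_one_negtwo (a₁ a₂ a₃ : ℤ)
    (hne : ¬ (a₁ = 0 ∧ a₂ = 0 ∧ a₃ = 0))
    (hsum : a₁ + a₂ + a₃ = 0)
    (hgcd : Int.gcd (Int.gcd a₁ a₂) a₃ = 1) :
    Relation.ReflTransGen SigMove (a₁, a₂, a₃) (1, 1, -2) :=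
  reduce_to_one_one_negtwo_general a₁ a₂ a₃ hsum hgcd
end
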